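/- arXiv:1411.6487 — 3 statements merged into one kernel-verified Lean document; each statement's English description precedes it below -/
import Mathlib

section
/- Let (X, 𝓑, μ) be a probability space and T : X → X a measure-preserving transformation. For every integrable function φ and all integers 0 ≤ k ≤ i, the conditional expectation satisfies E[φ∘Tᵏ | T^{-i}𝓑] = (E[φ | T^{-(i-k)}𝓑]) ∘ Tᵏ almost everywhere. -/
/-!
For a measure-preserving `f` and a sub-σ-algebra `m`, the function `ν[g | m] ∘ f` is
`m.comap f`-measurable, and on a generating set `f ⁻¹' t` its integral is, by change of variables,
`∫_t ν[g | m] dν = ∫_t g dν = ∫_{f ⁻¹' t} g ∘ f dμ`; so it is `μ[g ∘ f | m.comap f]`. The theorem is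
the case `f = T^[k]`, `m = comap T^[i-k]`, since `comap T^[i] = comap T^[k] (comap T^[i-k])`.
-/

open MeasureTheory

namespace MeasureTheory.MeasurePreserving

variable {X Y E : Type*} {m : MeasurableSpace Y} [mX : MeasurableSpace X] [mY : MeasurableSpace Y]
  [NormedAddCommGroup E] [NormedSpace ℝ E] {μ : Measure X} {ν : Measure Y} {f : X → Y}

theorem setIntegral_preimage (hf : MeasurePreserving f μ ν) {s : Set Y} (hs : MeasurableSet s)
    {g : Y → E} (hg : AEStronglyMeasurable g ν) :
    ∫ x in f ⁻¹' s, g (f x) ∂μ = ∫ y in s, g y ∂ν := by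
  rw [← setIntegral_map hs (by rwa [hf.map_eq]) hf.measurable.aemeasurable, hf.map_eq]

theorem comap_le (hf : MeasurePreserving f μ ν) (hm : m ≤ mY) : m.comap f ≤ mX :=
  (MeasurableSpace.comap_mono hm).trans hf.measurable.comap_le

theorem sigmaFinite_trim_comap (hf : MeasurePreserving f μ ν) (hm : m ≤ mY)
    [SigmaFinite (ν.trim hm)] : SigmaFinite (μ.trim (hf.comap_le hm)) := by
  have hf_meas : Measurable[m.comap f, m] f := Measurable.of_comap_le le_rfl
  have hmap : @Measure.map _ _ (m.comap f) m f (μ.trim (hf.comap_le hm)) = ν.trim hm := by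
    refine @Measure.ext _ m _ _ fun s hs => ?_
    rw [Measure.map_apply hf_meas hs,
      trim_measurableSet_eq _ (show MeasurableSet[m.comap f] (f ⁻¹' s) from ⟨s, hs, rfl⟩),
      trim_measurableSet_eq _ hs, hf.measure_preimage (hm s hs).nullMeasurableSet]
  have : SigmaFinite (@Measure.map _ _ (m.comap f) m f (μ.trim (hf.comap_le hm))) := by
    rwa [hmap]
  exact @SigmaFinite.of_map _ _ _ m _ _ (@Measurable.aemeasurable _ _ _ m _ _ hf_meas) this

theorem condExp_comp [CompleteSpace E] (hf : MeasurePreserving f μ ν) (hm : m ≤ mY)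
    [SigmaFinite (ν.trim hm)] {g : Y → E} (hg : Integrable g ν) :
    μ[g ∘ f | m.comap f] =ᵐ[μ] ν[g | m] ∘ f := by
  have := hf.sigmaFinite_trim_comap hm
  have hcondExp_meas : AEStronglyMeasurable (ν[g | m]) ν :=
    (stronglyMeasurable_condExp.mono hm).aestronglyMeasurable
  refine (ae_eq_condExp_of_forall_setIntegral_eq (hf.comap_le hm)
    (hf.integrable_comp_of_integrable hg)
    (fun s _ _ => (hf.integrable_comp_of_integrable integrable_condExp).integrableOn)
    (fun s hs _ => ?_) ?_).symm
  · obtain ⟨t, ht, rfl⟩ := hs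
    rw [Function.comp_def, Function.comp_def, hf.setIntegral_preimage (hm t ht) hcondExp_meas,
      hf.setIntegral_preimage (hm t ht) hg.aestronglyMeasurable, setIntegral_condExp hm hg ht]
  · exact (stronglyMeasurable_condExp.comp_measurable
      (Measurable.of_comap_le le_rfl)).aestronglyMeasurable

end MeasureTheory.MeasurePreserving

theorem condExp_comp_iterate {X : Type*} [m : MeasurableSpace X] (μ : Measure X)
    [IsProbabilityMeasure μ] (T : X → X) (hT : MeasurePreserving T μ μ)
    (φ : X → ℝ) (hφ : Integrable φ μ) (k i : ℕ) (hki : k ≤ i) :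
    μ[fun x => φ (T^[k] x) | MeasurableSpace.comap (T^[i]) m]
      =ᵐ[μ] fun x => (μ[φ | MeasurableSpace.comap (T^[i - k]) m]) (T^[k] x) := by
  have hcomap : MeasurableSpace.comap (T^[i]) m
      = (MeasurableSpace.comap (T^[i - k]) m).comap (T^[k]) := by
    rw [MeasurableSpace.comap_comp, ← Function.iterate_add, Nat.sub_add_cancel hki]
  rw [hcomap]
  exact (hT.iterate k).condExp_comp (hT.iterate (i - k)).measurable.comap_le hφ
end

section
/- Let (Sₙ) be a sequence of real random variables on a probability space with an ergodic measure-preserving transformation, such that the event {sup_n |Sₙ| = +∞} is invariant. Suppose there are constants C, C₄ > 0 with E[Sₙ²] ≥ C²·σₙ² and E[Sₙ⁴] ≤ C₄⁴·σₙ⁴ where σₙ² → ∞. Then sup_n |Sₙ| = +∞ almost everywhere. -/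
/-!
Paley–Zygmund applied to `Sₙ²` with `θ = 1/2` gives `μ {Sₙ² ≥ C² σₙ² / 2} ≥ C⁴ / (4 C₄⁴)` for
every `n`. Since `σₙ → ∞`, every level `M` is exceeded by some `|Sₙ|` on a set of at least that
measure, so by continuity from above the event `{supₙ |Sₙ| = ∞}` has positive measure. It is
`T`-invariant, hence of full measure by ergodicity.
-/

open MeasureTheory Filter

section

variable {X : Type*} [MeasurableSpace X] {μ : Measure X}

theorem sq_integral_le_measureReal_univ_mul_integral_sq [IsFiniteMeasure μ] {f : X → ℝ}
    (hf : Integrable f μ) (hf2 : Integrable (fun x => f x ^ 2) μ) :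
    (∫ x, f x ∂μ) ^ 2 ≤ μ.real Set.univ * ∫ x, f x ^ 2 ∂μ := by
  have hquad : ∀ t : ℝ,
      0 ≤ μ.real Set.univ * (t * t) + (-2 * ∫ x, f x ∂μ) * t + ∫ x, f x ^ 2 ∂μ := by
    intro t
    have hexpand : ∫ x, (f x - t) ^ 2 ∂μ
        = μ.real Set.univ * (t * t) + (-2 * ∫ x, f x ∂μ) * t + ∫ x, f x ^ 2 ∂μ := by
      have hsq : (fun x => (f x - t) ^ 2) = fun x => f x ^ 2 - 2 * t * f x + t * t := by
        funext x; ring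
      have hlin : Integrable (fun x => f x ^ 2 - 2 * t * f x) μ := hf2.sub (hf.const_mul _)
      rw [hsq, integral_add hlin (integrable_const _),
        integral_sub hf2 (hf.const_mul _), integral_const_mul, integral_const, smul_eq_mul]
      ring
    exact hexpand ▸ integral_nonneg fun x => sq_nonneg _
  have hdisc := discrim_le_zero hquad
  rw [discrim] at hdisc
  linarith

theorem sq_setIntegral_le_measureReal_mul_setIntegral_sq [IsFiniteMeasure μ] {f : X → ℝ}
    (hf : Integrable f μ) (hf2 : Integrable (fun x => f x ^ 2) μ) (s : Set X) :
    (∫ x in s, f x ∂μ) ^ 2 ≤ μ.real s * ∫ x in s, f x ^ 2 ∂μ := by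
  simpa using
    sq_integral_le_measureReal_univ_mul_integral_sq (μ := μ.restrict s) hf.restrict hf2.restrict

theorem paley_zygmund [IsProbabilityMeasure μ] {Z : X → ℝ} (hZ0 : 0 ≤ᵐ[μ] Z)
    (hZ : Integrable Z μ) (hZ2 : Integrable (fun x => Z x ^ 2) μ) {θ : ℝ} (hθ0 : 0 ≤ θ)
    (hθ1 : θ ≤ 1) :
    (1 - θ) ^ 2 * (∫ x, Z x ∂μ) ^ 2
      ≤ μ.real {x | θ * ∫ x, Z x ∂μ ≤ Z x} * ∫ x, Z x ^ 2 ∂μ := by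
  set m := ∫ x, Z x ∂μ
  set B := {x | θ * m ≤ Z x}
  have hm : 0 ≤ m := integral_nonneg_of_ae hZ0
  have hB : NullMeasurableSet B μ := nullMeasurableSet_le aemeasurable_const hZ.aemeasurable
  have hsmall : ∫ x in Bᶜ, Z x ∂μ ≤ θ * m := by
    calc ∫ x in Bᶜ, Z x ∂μ ≤ ∫ x in Bᶜ, θ * m ∂μ :=
          setIntegral_mono_on₀ hZ.integrableOn integrableOn_const hB.compl
            fun _ hx => le_of_not_ge hx
      _ = μ.real Bᶜ * (θ * m) := by rw [setIntegral_const, smul_eq_mul]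
      _ ≤ θ * m := mul_le_of_le_one_left (by positivity) measureReal_le_one
  have hlarge : (1 - θ) * m ≤ ∫ x in B, Z x ∂μ := by
    have := integral_add_compl₀ hB hZ
    linarith
  calc (1 - θ) ^ 2 * m ^ 2 = ((1 - θ) * m) ^ 2 := by ring
    _ ≤ (∫ x in B, Z x ∂μ) ^ 2 := pow_le_pow_left₀ (by nlinarith) hlarge 2
    _ ≤ μ.real B * ∫ x in B, Z x ^ 2 ∂μ :=
        sq_setIntegral_le_measureReal_mul_setIntegral_sq hZ hZ2 B
    _ ≤ μ.real B * ∫ x, Z x ^ 2 ∂μ := mul_le_mul_of_nonneg_left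
        (setIntegral_le_integral hZ2 (Eventually.of_forall fun x => sq_nonneg _)) measureReal_nonneg

theorem sq_le_measureReal_sq_ge_mul_of_moments [IsProbabilityMeasure μ] {S : X → ℝ}
    (hS2 : Integrable (fun x => S x ^ 2) μ) (hS4 : Integrable (fun x => S x ^ 4) μ) {a b : ℝ}
    (ha : 0 ≤ a) (hlow : a ≤ ∫ x, S x ^ 2 ∂μ) (hup : ∫ x, S x ^ 4 ∂μ ≤ b) :
    a ^ 2 ≤ 4 * μ.real {x | a / 2 ≤ S x ^ 2} * b := by
  have hpow : (fun x => (S x ^ 2) ^ 2) = fun x => S x ^ 4 := by funext x; ring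
  have hpz := paley_zygmund (Eventually.of_forall fun x => sq_nonneg (S x)) hS2
    (hpow ▸ hS4) (θ := 1 / 2) (by norm_num) (by norm_num)
  rw [hpow] at hpz
  have hsub : μ.real {x | 1 / 2 * ∫ x, S x ^ 2 ∂μ ≤ S x ^ 2} ≤ μ.real {x | a / 2 ≤ S x ^ 2} :=
    measureReal_mono fun x hx => by
      simp only [Set.mem_ofPred_eq] at hx ⊢
      linarith
  calc a ^ 2 ≤ (∫ x, S x ^ 2 ∂μ) ^ 2 := pow_le_pow_left₀ ha hlow 2
    _ ≤ 4 * μ.real {x | 1 / 2 * ∫ x, S x ^ 2 ∂μ ≤ S x ^ 2} * ∫ x, S x ^ 4 ∂μ := by linarith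
    _ ≤ 4 * μ.real {x | a / 2 ≤ S x ^ 2} * b := by gcongr

theorem le_measure_setOf_not_bddAbove_range [IsFiniteMeasure μ] {f : ℕ → X → ℝ}
    (hf : ∀ n, Measurable (f n)) {ε : ENNReal} (h : ∀ M : ℝ, ∃ n, ε ≤ μ {x | M < f n x}) :
    ε ≤ μ {x | ¬ BddAbove (Set.range fun n => f n x)} := by
  set E : ℝ → Set X := fun M => ⋃ n, {x | M < f n x}
  have hunbdd : {x | ¬ BddAbove (Set.range fun n => f n x)} = ⋂ M, E M := by
    ext x
    simp [E, not_bddAbove_iff]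
  have hanti : Antitone E := fun M M' hMM' x hx => by
    obtain ⟨n, hn⟩ := Set.mem_iUnion.1 hx
    exact Set.mem_iUnion.2 ⟨n, lt_of_le_of_lt hMM' hn⟩
  have hE : ∀ M, MeasurableSet (E M) := fun M =>
    MeasurableSet.iUnion fun n => measurableSet_lt measurable_const (hf n)
  rw [hunbdd, hanti.measure_iInter (fun M => (hE M).nullMeasurableSet) ⟨0, measure_ne_top μ _⟩]
  exact le_iInf fun M => (h M).elim fun n hn =>
    hn.trans (measure_mono (Set.subset_iUnion (fun n => {x | M < f n x}) n))

theorem exists_ofReal_le_measure_lt_abs_of_moments [IsProbabilityMeasure μ] {S : ℕ → X → ℝ}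
    {σ : ℕ → ℝ} (hσ : Tendsto (fun n => σ n ^ 2) atTop atTop) {C C₄ : ℝ} (hC : 0 < C)
    (hC₄ : 0 < C₄) (hint2 : ∀ n, Integrable (fun x => S n x ^ 2) μ)
    (hint4 : ∀ n, Integrable (fun x => S n x ^ 4) μ)
    (hlow : ∀ n, C ^ 2 * σ n ^ 2 ≤ ∫ x, S n x ^ 2 ∂μ)
    (hup : ∀ n, ∫ x, S n x ^ 4 ∂μ ≤ C₄ ^ 4 * σ n ^ 4) (M : ℝ) :
    ∃ n, ENNReal.ofReal (C ^ 4 / (4 * C₄ ^ 4)) ≤ μ {x | M < |S n x|} := by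
  obtain ⟨n, hn⟩ := (hσ.eventually_gt_atTop (2 * M ^ 2 / C ^ 2)).exists
  have hσn : 0 < σ n ^ 2 := lt_of_le_of_lt (by positivity) hn
  have hM : M ^ 2 < C ^ 2 * σ n ^ 2 / 2 := by
    rw [div_lt_iff₀ (by positivity)] at hn
    linarith
  have hsub : {x | C ^ 2 * σ n ^ 2 / 2 ≤ S n x ^ 2} ⊆ {x | M < |S n x|} := fun x hx =>
    (le_abs_self M).trans_lt (sq_lt_sq.1 (hM.trans_le hx))
  have hmom := sq_le_measureReal_sq_ge_mul_of_moments (hint2 n) (hint4 n) (by positivity)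
    (hlow n) (hup n)
  refine ⟨n, (ENNReal.ofReal_le_iff_le_toReal (measure_ne_top _ _)).2 ?_⟩
  calc C ^ 4 / (4 * C₄ ^ 4) ≤ μ.real {x | C ^ 2 * σ n ^ 2 / 2 ≤ S n x ^ 2} := by
        rw [div_le_iff₀ (by positivity)]
        refine le_of_mul_le_mul_right ?_ (pow_pos hσn 2)
        linarith [hmom]
    _ ≤ μ.real {x | M < |S n x|} := measureReal_mono hsub

end

theorem sup_infinite_ae_of_moments {X : Type*} [MeasurableSpace X] (μ : Measure X)
    [IsProbabilityMeasure μ] (T : X → X) (hT : Ergodic T μ)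
    (S : ℕ → X → ℝ) (hSmeas : ∀ n, Measurable (S n))
    (hinv : T ⁻¹' {x | ¬ BddAbove (Set.range fun n => |S n x|)}
      = {x | ¬ BddAbove (Set.range fun n => |S n x|)})
    (σ : ℕ → ℝ) (hσ : Tendsto (fun n => σ n ^ 2) atTop atTop)
    (C C₄ : ℝ) (hC : 0 < C) (hC₄ : 0 < C₄)
    (hint2 : ∀ n, Integrable (fun x => S n x ^ 2) μ)
    (hint4 : ∀ n, Integrable (fun x => S n x ^ 4) μ)
    (hlow : ∀ n, C ^ 2 * σ n ^ 2 ≤ ∫ x, S n x ^ 2 ∂μ)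
    (hup : ∀ n, ∫ x, S n x ^ 4 ∂μ ≤ C₄ ^ 4 * σ n ^ 4) :
    ∀ᵐ x ∂μ, ¬ BddAbove (Set.range fun n => |S n x|) := by
  have hmeas : MeasurableSet {x | ¬ BddAbove (Set.range fun n => |S n x|)} :=
    (measurableSet_bddAbove_range fun n => (hSmeas n).abs).compl
  have hpos : 0 < μ {x | ¬ BddAbove (Set.range fun n => |S n x|)} :=
    (ENNReal.ofReal_pos.2 (by positivity)).trans_le <|
      le_measure_setOf_not_bddAbove_range (fun n => (hSmeas n).abs) <|
        exists_ofReal_le_measure_lt_abs_of_moments hσ hC hC₄ hint2 hint4 hlow hup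
  exact (hT.ae_mem_or_ae_notMem hmeas hinv).resolve_right
    fun hnull => hpos.ne' (measure_eq_zero_iff_ae_notMem.2 hnull)
end

section
/- Let δ > 0, f ∈ C^{1+δ}(𝕋) (f continuously differentiable with δ-Hölder derivative, periodic with period 1), (aₙ) a bounded sequence with aₙ → 0, and F(x) = Σ_{n=0}^∞ aₙ 3^{-n} f(3ⁿx). Fix x ∈ 𝕋. Then F is differentiable at x if and only if the series Σ_{n=0}^∞ aₙ f'(3ⁿx) converges, and in that case F'(x) = Σ_{n=0}^∞ aₙ f'(3ⁿx). -/
/-!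
Write `D h = h⁻¹ (F (x + h) - F x)` and `S N` for the partial sums of `∑ aₙ f'(3ⁿ x)`.
Split the series for `D h` after the index `N`. By the Hölder bound on `f'`, each head term
`aₙ 3⁻ⁿ (f (3ⁿ (x + h)) - f (3ⁿ x)) / h` is within `C M (3ⁿ |h|)^δ` of `aₙ f'(3ⁿ x)`, and
these errors add up geometrically to `O((3ᴺ |h|)^δ)`. Since `f` is bounded, the tail is
`O(t / (3ᴺ |h|))` with `t = sup_{n > N} |aₙ|`. When `h → 0`, choose `N` so that `3ᴺ |h|` lies
in a window `(u / 3, u]` with `u` small: both errors are then small, because `t → 0`. So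
`D h` converges if `S` does; conversely, evaluate `D` along `h = u 3⁻ᴺ`.
-/

open Filter Finset Topology

theorem abs_sub_sub_deriv_mul_le_of_holder {f : ℝ → ℝ} {C δ : ℝ} (hδ : 0 ≤ δ)
    (hf : Differentiable ℝ f) (hC : ∀ x y, |deriv f x - deriv f y| ≤ C * |x - y| ^ δ)
    (p q : ℝ) : |f q - f p - deriv f p * (q - p)| ≤ C * |q - p| ^ δ * |q - p| := by
  have hC0 : 0 ≤ C := by simpa using (abs_nonneg _).trans (hC 0 1)
  set g : ℝ → ℝ := fun y => f y - deriv f p * y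
  have hg : ∀ y, HasDerivAt g (deriv f y - deriv f p) y := fun y =>
    (hf y).hasDerivAt.sub ((hasDerivAt_id y).const_mul (deriv f p) |>.congr_deriv (mul_one _))
  have hbound : ∀ y ∈ Set.uIcc p q, ‖deriv g y‖ ≤ C * |q - p| ^ δ := fun y hy => by
    rw [(hg y).deriv, Real.norm_eq_abs]
    exact (hC y p).trans <| mul_le_mul_of_nonneg_left
      (Real.rpow_le_rpow (abs_nonneg _) (Set.abs_sub_left_of_mem_uIcc hy) hδ) hC0
  have := Convex.norm_image_sub_le_of_norm_deriv_le (fun y _ => (hg y).differentiableAt)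
    hbound (convex_uIcc p q) Set.left_mem_uIcc Set.right_mem_uIcc
  simp only [g, Real.norm_eq_abs] at this
  convert this using 2
  ring

theorem Function.Periodic.exists_abs_le {f : ℝ → ℝ} {c : ℝ} (hf : Function.Periodic f c)
    (hc : c ≠ 0) (hcont : Continuous f) : ∃ B, ∀ y, |f y| ≤ B := by
  obtain ⟨B, hB⟩ := isBounded_iff_forall_norm_le.1 (hf.compact_of_continuous hc hcont).isBounded
  exact ⟨B, fun y => hB _ ⟨y, rfl⟩⟩

theorem geom_sum_range_succ_le {r : ℝ} (hr : 1 < r) (N : ℕ) :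
    ∑ n ∈ range (N + 1), r ^ n ≤ r / (r - 1) * r ^ N := by
  rw [geom_sum_eq hr.ne', div_mul_eq_mul_div, pow_succ',
    div_le_div_iff_of_pos_right (by linarith)]
  linarith

theorem exists_pos_mul_rpow_lt {δ : ℝ} (hδ : 0 < δ) (K : ℝ) {ε : ℝ} (hε : 0 < ε) :
    ∃ u > 0, K * u ^ δ < ε := by
  have hlim : Tendsto (fun u : ℝ => K * u ^ δ) (𝓝[>] 0) (𝓝 0) := by
    have := ((Real.continuousAt_rpow_const 0 δ (Or.inr hδ.le)).const_mul K).tendsto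
    rw [Real.zero_rpow hδ.ne', mul_zero] at this
    exact this.mono_left nhdsWithin_le_nhds
  obtain ⟨u, hKu, hu⟩ := ((hlim.eventually (gt_mem_nhds hε)).and self_mem_nhdsWithin).exists
  exact ⟨u, hu, hKu⟩

theorem exists_pow_mul_mem_Ioc {b : ℝ} (hb : 1 < b) {u y : ℝ} (hy : 0 < y) {N₀ : ℕ}
    (hyu : y < u / b ^ N₀) : ∃ N ≥ N₀, b ^ N * y ∈ Set.Ioc (u / b) u := by
  have hbN₀ : b ^ N₀ < u / y := by rwa [lt_div_iff₀ hy, mul_comm, ← lt_div_iff₀ (by positivity)]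
  obtain ⟨N, hN, hN'⟩ := exists_nat_pow_near (one_le_pow₀ hb.le |>.trans hbN₀.le) hb
  refine ⟨N, Nat.lt_succ_iff.1 ((pow_lt_pow_iff_right₀ hb).1 (hbN₀.trans hN')), ?_, ?_⟩
  · rwa [div_lt_iff₀ hy, pow_succ', mul_assoc, ← div_lt_iff₀' (by linarith)] at hN'
  · rwa [le_div_iff₀ hy] at hN

def ApproxAtScales (b δ K : ℝ) (D : ℝ → ℝ) (S : ℕ → ℝ) : Prop :=
  ∀ ε > 0, ∀ᶠ N in atTop, ∀ h ≠ 0,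
    |D h - S (N + 1)| ≤ K * (b ^ N * |h|) ^ δ + ε / (b ^ N * |h|)

namespace ApproxAtScales

variable {b δ K l : ℝ} {D : ℝ → ℝ} {S : ℕ → ℝ}

theorem tendsto_atTop (hb : 1 < b) (hδ : 0 < δ) (hA : ApproxAtScales b δ K D S)
    (hD : Tendsto D (𝓝[≠] 0) (𝓝 l)) : Tendsto S atTop (𝓝 l) := by
  rw [← tendsto_add_atTop_iff_nat 1, Metric.tendsto_atTop]
  intro ε hε
  obtain ⟨u, hu, hKu⟩ := exists_pos_mul_rpow_lt hδ K (by positivity : 0 < ε / 3)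
  have hscale : Tendsto (fun N : ℕ => u / b ^ N) atTop (𝓝[≠] 0) :=
    tendsto_nhdsWithin_of_tendsto_nhds_of_eventually_within _
      (tendsto_const_nhds.div_atTop (tendsto_pow_atTop_atTop_of_one_lt hb))
      (Eventually.of_forall fun N => by simp [hu.ne', (zero_lt_one.trans hb).ne'])
  obtain ⟨N₀, hN₀⟩ := eventually_atTop.1 ((hA (ε / 3 * u) (by positivity)).and
    (Metric.tendsto_nhds.1 (hD.comp hscale) (ε / 3) (by positivity)))
  refine ⟨N₀, fun N hN => ?_⟩
  obtain ⟨happrox, hclose⟩ := hN₀ N hN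
  have hbN : 0 < b ^ N := by positivity
  have hu' : b ^ N * |u / b ^ N| = u := by
    rw [abs_of_pos (by positivity), mul_div_cancel₀ _ hbN.ne']
  have h1 := happrox (u / b ^ N) (by positivity)
  rw [hu', mul_div_cancel_right₀ _ hu.ne'] at h1
  rw [Function.comp_apply, Real.dist_eq] at hclose
  rw [Real.dist_eq]
  calc |S (N + 1) - l| ≤ |S (N + 1) - D (u / b ^ N)| + |D (u / b ^ N) - l| := abs_sub_le _ _ _
    _ < ε := by rw [abs_sub_comm]; linarith

theorem tendsto_nhdsNE (hb : 1 < b) (hδ : 0 < δ) (hK : 0 ≤ K) (hA : ApproxAtScales b δ K D S)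
    (hS : Tendsto S atTop (𝓝 l)) : Tendsto D (𝓝[≠] 0) (𝓝 l) := by
  rw [Metric.tendsto_nhdsWithin_nhds]
  intro ε hε
  obtain ⟨u, hu, hKu⟩ := exists_pos_mul_rpow_lt hδ K (by positivity : 0 < ε / 3)
  have hb0 : 0 < b := by linarith
  obtain ⟨N₀, hN₀⟩ := eventually_atTop.1 ((hA (ε * u / (3 * b)) (by positivity)).and
    (Metric.tendsto_nhds.1 ((tendsto_add_atTop_iff_nat 1).2 hS) (ε / 3) (by positivity)))
  refine ⟨u / b ^ N₀, by positivity, fun h hh hdist => ?_⟩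
  have hh0 : h ≠ 0 := hh
  rw [Real.dist_eq, sub_zero] at hdist
  obtain ⟨N, hN, hlt, hle⟩ := exists_pow_mul_mem_Ioc hb (abs_pos.2 hh0) hdist
  obtain ⟨happrox, hclose⟩ := hN₀ N hN
  have hv : 0 < b ^ N * |h| := by positivity
  have h1 : K * (b ^ N * |h|) ^ δ ≤ K * u ^ δ :=
    mul_le_mul_of_nonneg_left (Real.rpow_le_rpow hv.le hle hδ.le) hK
  have h2 : ε * u / (3 * b) / (b ^ N * |h|) < ε / 3 := by
    rw [div_lt_iff₀ hb0] at hlt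
    rw [div_lt_iff₀ hv, div_lt_iff₀ (by positivity)]
    nlinarith
  rw [Real.dist_eq] at hclose ⊢
  calc |D h - l| ≤ |D h - S (N + 1)| + |S (N + 1) - l| := abs_sub_le _ _ _
    _ < ε := by linarith [(happrox h hh0).trans (add_le_add h1 h2.le)]

theorem tendsto_nhdsNE_iff (hb : 1 < b) (hδ : 0 < δ) (hK : 0 ≤ K)
    (hA : ApproxAtScales b δ K D S) :
    Tendsto D (𝓝[≠] 0) (𝓝 l) ↔ Tendsto S atTop (𝓝 l) :=
  ⟨hA.tendsto_atTop hb hδ, hA.tendsto_nhdsNE hb hδ hK⟩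

end ApproxAtScales

noncomputable def weierstrassSum (b : ℝ) (a : ℕ → ℝ) (f : ℝ → ℝ) (x : ℝ) : ℝ :=
  ∑' n : ℕ, a n * b ^ (-(n : ℤ)) * f (b ^ n * x)

section WeierstrassSum

variable {b δ C M B : ℝ} {f : ℝ → ℝ} {a : ℕ → ℝ}

theorem abs_slope_comp_mul_sub_deriv_le (hδ : 0 ≤ δ) (hf : Differentiable ℝ f)
    (hC : ∀ x y, |deriv f x - deriv f y| ≤ C * |x - y| ^ δ) {s : ℝ} (hs : 0 < s) (x : ℝ)
    {h : ℝ} (hh : h ≠ 0) :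
    |h⁻¹ * (s⁻¹ * (f (s * (x + h)) - f (s * x))) - deriv f (s * x)| ≤ C * (s * |h|) ^ δ := by
  have hsh : 0 < |s * h| := abs_pos.2 (mul_ne_zero hs.ne' hh)
  have htaylor := abs_sub_sub_deriv_mul_le_of_holder hδ hf hC (s * x) (s * (x + h))
  rw [show s * (x + h) - s * x = s * h by ring] at htaylor
  calc |h⁻¹ * (s⁻¹ * (f (s * (x + h)) - f (s * x))) - deriv f (s * x)|
      = |s * h|⁻¹ * |f (s * (x + h)) - f (s * x) - deriv f (s * x) * (s * h)| := by
        rw [← abs_inv, ← abs_mul]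
        congr 1
        field_simp
    _ ≤ |s * h|⁻¹ * (C * |s * h| ^ δ * |s * h|) := by gcongr
    _ = C * (s * |h|) ^ δ := by
        rw [abs_mul, abs_of_pos hs] at hsh ⊢
        field_simp

theorem summable_weierstrassSum (hb : 1 < b) (hM : ∀ n, |a n| ≤ M) (hB : ∀ y, |f y| ≤ B)
    (y : ℝ) : Summable fun n : ℕ => a n * b ^ (-(n : ℤ)) * f (b ^ n * y) := by
  have hM0 : 0 ≤ M := (abs_nonneg _).trans (hM 0)
  refine .of_norm_bounded ((summable_geometric_of_lt_one (inv_nonneg.2 (by linarith))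
    (inv_lt_one_of_one_lt₀ hb)).mul_left (M * B)) fun n => ?_
  rw [zpow_neg, zpow_natCast, ← inv_pow, Real.norm_eq_abs, abs_mul, abs_mul,
    abs_of_pos (by positivity : 0 < b⁻¹ ^ n)]
  calc |a n| * b⁻¹ ^ n * |f (b ^ n * y)| ≤ M * b⁻¹ ^ n * B := by
        gcongr
        exacts [hM n, hB _]
    _ = M * B * b⁻¹ ^ n := by ring

theorem hasSum_weierstrassSum_sub (hb : 1 < b) (hM : ∀ n, |a n| ≤ M) (hB : ∀ y, |f y| ≤ B)
    (x h : ℝ) :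
    HasSum (fun n : ℕ => a n * ((b ^ n)⁻¹ * (f (b ^ n * (x + h)) - f (b ^ n * x))))
      (weierstrassSum b a f (x + h) - weierstrassSum b a f x) := by
  refine ((summable_weierstrassSum hb hM hB (x + h)).hasSum.sub
    (summable_weierstrassSum hb hM hB x).hasSum).congr_fun fun n => ?_
  rw [zpow_neg, zpow_natCast]
  ring

theorem abs_sum_range_mul_slope_sub_le (hb : 1 < b) (hδ : 0 < δ) (hf : Differentiable ℝ f)
    (hC : ∀ x y, |deriv f x - deriv f y| ≤ C * |x - y| ^ δ) (hM : ∀ n, |a n| ≤ M) (N : ℕ)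
    (x : ℝ) {h : ℝ} (hh : h ≠ 0) :
    |∑ n ∈ range (N + 1),
        a n * (h⁻¹ * ((b ^ n)⁻¹ * (f (b ^ n * (x + h)) - f (b ^ n * x))) - deriv f (b ^ n * x))|
      ≤ C * M * (b ^ δ / (b ^ δ - 1)) * (b ^ N * |h|) ^ δ := by
  have hb0 : 0 ≤ b := by linarith
  have hC0 : 0 ≤ C := by simpa using (abs_nonneg _).trans (hC 0 1)
  have hM0 : 0 ≤ M := (abs_nonneg _).trans (hM 0)
  have hscale : ∀ n : ℕ, (b ^ n * |h|) ^ δ = (b ^ δ) ^ n * |h| ^ δ := fun n => by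
    rw [Real.mul_rpow (by positivity) (abs_nonneg h), Real.rpow_pow_comm hb0]
  calc _ ≤ ∑ n ∈ range (N + 1), M * (C * (b ^ n * |h|) ^ δ) := by
        refine (abs_sum_le_sum_abs _ _).trans (sum_le_sum fun n _ => ?_)
        rw [abs_mul]
        exact mul_le_mul (hM n)
          (abs_slope_comp_mul_sub_deriv_le hδ.le hf hC (by positivity) x hh) (abs_nonneg _) hM0
    _ = C * M * |h| ^ δ * ∑ n ∈ range (N + 1), (b ^ δ) ^ n := by
        rw [mul_sum]
        exact sum_congr rfl fun n _ => by rw [hscale]; ring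
    _ ≤ C * M * |h| ^ δ * (b ^ δ / (b ^ δ - 1) * (b ^ δ) ^ N) := by
        gcongr
        exact geom_sum_range_succ_le (Real.one_lt_rpow hb hδ) N
    _ = C * M * (b ^ δ / (b ^ δ - 1)) * (b ^ N * |h|) ^ δ := by rw [hscale]; ring

theorem abs_tsum_mul_increment_le (hb : 1 < b) (hB : ∀ y, |f y| ≤ B) {N : ℕ} {t : ℝ}
    (ht : ∀ n, N < n → |a n| ≤ t) (x h : ℝ) :
    |∑' n : ℕ, a (n + (N + 1)) *
        ((b ^ (n + (N + 1)))⁻¹ * (f (b ^ (n + (N + 1)) * (x + h)) - f (b ^ (n + (N + 1)) * x)))|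
      ≤ 2 * B * t / (b - 1) / b ^ N := by
  have hb0 : 0 < b := by linarith
  have ht0 : 0 ≤ t := (abs_nonneg _).trans (ht (N + 1) N.lt_succ_self)
  have hgeom := (hasSum_geometric_of_lt_one (inv_nonneg.2 hb0.le)
    (inv_lt_one_of_one_lt₀ hb)).mul_left (2 * B * t * b⁻¹ ^ (N + 1))
  rw [← Real.norm_eq_abs]
  refine (tsum_of_norm_bounded hgeom fun n => ?_).trans_eq ?_
  · have hdiff : |f (b ^ (n + (N + 1)) * (x + h)) - f (b ^ (n + (N + 1)) * x)| ≤ 2 * B := by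
      linarith [abs_sub (f (b ^ (n + (N + 1)) * (x + h))) (f (b ^ (n + (N + 1)) * x)),
        hB (b ^ (n + (N + 1)) * (x + h)), hB (b ^ (n + (N + 1)) * x)]
    rw [Real.norm_eq_abs, abs_mul, abs_mul,
      abs_of_pos (by positivity : 0 < (b ^ (n + (N + 1)))⁻¹)]
    calc _ ≤ t * ((b ^ (n + (N + 1)))⁻¹ * (2 * B)) := by
          gcongr
          exact ht _ (by omega)
      _ = 2 * B * t * b⁻¹ ^ (N + 1) * b⁻¹ ^ n := by rw [← inv_pow, pow_add]; ring
  · have hb1 : b - 1 ≠ 0 := by linarith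
    rw [inv_pow]
    field_simp
    ring

theorem abs_slope_weierstrassSum_sub_le (hb : 1 < b) (hδ : 0 < δ) (hf : Differentiable ℝ f)
    (hC : ∀ x y, |deriv f x - deriv f y| ≤ C * |x - y| ^ δ) (hM : ∀ n, |a n| ≤ M)
    (hB : ∀ y, |f y| ≤ B) {N : ℕ} {t : ℝ} (ht : ∀ n, N < n → |a n| ≤ t) (x : ℝ) {h : ℝ}
    (hh : h ≠ 0) :
    |h⁻¹ * (weierstrassSum b a f (x + h) - weierstrassSum b a f x) -
        ∑ n ∈ range (N + 1), a n * deriv f (b ^ n * x)|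
      ≤ C * M * (b ^ δ / (b ^ δ - 1)) * (b ^ N * |h|) ^ δ
        + 2 * B * t / (b - 1) / (b ^ N * |h|) := by
  have hsum := hasSum_weierstrassSum_sub hb hM hB x h
  rw [← hsum.tsum_eq, ← hsum.summable.sum_add_tsum_nat_add (N + 1), mul_add, mul_sum,
    add_sub_right_comm, ← sum_sub_distrib]
  have htail := abs_tsum_mul_increment_le hb hB ht x h
  refine (abs_add_le _ _).trans (add_le_add ?_ ?_)
  · exact Eq.trans_le (congrArg _ (sum_congr rfl fun n _ => by ring))
      (abs_sum_range_mul_slope_sub_le hb hδ hf hC hM N x hh)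
  · rw [abs_mul, abs_inv, inv_mul_eq_div, ← div_div]
    exact div_le_div_of_nonneg_right htail (abs_nonneg h)

theorem exists_approxAtScales_weierstrassSum (hb : 1 < b) (hδ : 0 < δ)
    (hf : Differentiable ℝ f) (hC : ∀ x y, |deriv f x - deriv f y| ≤ C * |x - y| ^ δ)
    (hM : ∀ n, |a n| ≤ M) (hB : ∀ y, |f y| ≤ B) (ha : Tendsto a atTop (𝓝 0)) (x : ℝ) :
    ∃ K ≥ 0, ApproxAtScales b δ K
      (fun h => h⁻¹ * (weierstrassSum b a f (x + h) - weierstrassSum b a f x))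
      (fun N => ∑ n ∈ range N, a n * deriv f (b ^ n * x)) := by
  have hC0 : 0 ≤ C := by simpa using (abs_nonneg _).trans (hC 0 1)
  have hM0 : 0 ≤ M := (abs_nonneg _).trans (hM 0)
  have hB0 : 0 ≤ B := (abs_nonneg _).trans (hB 0)
  have hbδ : 1 < b ^ δ := Real.one_lt_rpow hb hδ
  refine ⟨C * M * (b ^ δ / (b ^ δ - 1)), by positivity, fun ε hε => ?_⟩
  have hb1 : 0 < b - 1 := by linarith
  obtain ⟨N₀, hN₀⟩ := Metric.tendsto_atTop.1 ha (ε * (b - 1) / (2 * B + 1)) (by positivity)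
  filter_upwards [eventually_ge_atTop N₀] with N hN h hh
  refine (abs_slope_weierstrassSum_sub_le hb hδ hf hC hM hB
    (t := ε * (b - 1) / (2 * B + 1)) (fun n hn => ?_) x hh).trans ?_
  · simpa [Real.dist_eq] using (hN₀ n (by omega)).le
  · gcongr
    rw [div_le_iff₀ hb1, mul_div_assoc', div_le_iff₀ (by positivity)]
    nlinarith

theorem weierstrass_differentiability (δ : ℝ) (hδ : 0 < δ)
    (f : ℝ → ℝ) (hper : Function.Periodic f 1) (hdiff : Differentiable ℝ f)
    (hholder : ∃ C : ℝ, ∀ x y : ℝ, |deriv f x - deriv f y| ≤ C * |x - y| ^ δ)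
    (a : ℕ → ℝ) (hbdd : ∃ M : ℝ, ∀ n, |a n| ≤ M) (h0 : Tendsto a atTop (nhds 0))
    (F : ℝ → ℝ) (hF : F = fun x => ∑' n : ℕ, a n * (3 : ℝ) ^ (-(n : ℤ)) * f (3 ^ n * x))
    (x : ℝ) :
    (DifferentiableAt ℝ F x ↔
      ∃ l : ℝ, Tendsto (fun N => ∑ n ∈ Finset.range N, a n * deriv f (3 ^ n * x))
        atTop (nhds l)) ∧
    ∀ l : ℝ, Tendsto (fun N => ∑ n ∈ Finset.range N, a n * deriv f (3 ^ n * x))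
        atTop (nhds l) → HasDerivAt F l x := by
  obtain ⟨C, hC⟩ := hholder
  obtain ⟨M, hM⟩ := hbdd
  obtain ⟨B, hB⟩ := hper.exists_abs_le one_ne_zero hdiff.continuous
  obtain ⟨K, hK, hA⟩ := exists_approxAtScales_weierstrassSum (by norm_num : (1 : ℝ) < 3) hδ
    hdiff hC hM hB h0 x
  have hderiv : ∀ l, HasDerivAt F l x ↔
      Tendsto (fun N => ∑ n ∈ range N, a n * deriv f (3 ^ n * x)) atTop (𝓝 l) := fun l => by
    rw [hasDerivAt_iff_tendsto_slope_zero, hF]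
    exact hA.tendsto_nhdsNE_iff (by norm_num) hδ hK
  refine ⟨⟨fun hd => ⟨_, (hderiv _).1 hd.hasDerivAt⟩, fun ⟨l, hl⟩ => ?_⟩, fun l => (hderiv l).2⟩
  exact ((hderiv l).2 hl).differentiableAt
end WeierstrassSum
end
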